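/- arXiv:1109.4548 — 2 statements merged into one kernel-verified Lean document; each statement's English description precedes it below -/
import Mathlib

section
/- Let b ≥ 2 be an integer, j₁, j₂ ∈ ℕ₀ = {0,1,2,…}, m₁ ∈ {0,…,b^{j₁}−1}, m₂ ∈ {0,…,b^{j₂}−1}, ℓ₁, ℓ₂ ∈ {1,…,b−1}, and let z = (z₁,z₂) ∈ [0,1)². If z does not lie in the interior of the box I_{j₁,m₁} × I_{j₂,m₂}, i.e. z ∉ (b^{−j₁}m₁, b^{−j₁}(m₁+1)) × (b^{−j₂}m₂, b^{−j₂}(m₂+1)), then ∫_{[0,1)²} 1[x₁ > z₁]·1[x₂ > z₂] · h_{j₁,m₁,ℓ₁}(x₁) · h_{j₂,m₂,ℓ₂}(x₂) dx₁dx₂ = 0. -/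
/-!
Both the integrand and the domain split as products, so the double integral is the product of
the one-dimensional coefficients `∫₀¹ 1[x > zᵢ] h(x) dx`, and it suffices that one of them
vanishes. In one dimension, `h_{j,m,ℓ}` is supported in `I_{j,m}` and has mean zero, since its
values on the `b` subintervals are the `b`-th roots of unity `ω^{ℓk}` with `ω^ℓ ≠ 1`. If `z` is
to the right of the interior of `I_{j,m}`, then `1[x > z] h(x)` vanishes identically; if `z` is
to the left, it agrees with `h` off the single point `z`.
-/

open Finset MeasureTheory

/-- `bexp b ℓ k = exp(2πiℓk/b)`. -/
noncomputable def bexp (b ℓ k : ℕ) : ℂ :=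
  Complex.exp (2 * Real.pi * Complex.I * ℓ * k / b)

/-- The `b`-adic Haar function `h_{j,m,ℓ}` on `[0,1)`. -/
noncomputable def haar (b j m ℓ : ℕ) (x : ℝ) : ℂ :=
  ∑ k ∈ Finset.range b,
    if ((b:ℝ)^(j+1))⁻¹ * ((b:ℝ)*m + k) ≤ x ∧ x < ((b:ℝ)^(j+1))⁻¹ * ((b:ℝ)*m + k + 1)
    then bexp b ℓ k else 0

lemma integral_indicator_Ioi_eq_zero {E : Type*} [NormedAddCommGroup E] [NormedSpace ℝ E]
    {μ : Measure ℝ} [NullSingletonClass μ] {f : ℝ → E} {L R z : ℝ}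
    (hf : Function.support f ⊆ Set.Icc L R) (h0 : ∫ x, f x ∂μ = 0) (hz : z ∉ Set.Ioo L R) :
    ∫ x, (Set.Ioi z).indicator f x ∂μ = 0 := by
  rcases le_or_gt z L with hzL | hLz
  · rw [integral_congr_ae (indicator_ae_eq_of_ae_eq_set Ioi_ae_eq_Ici),
      Set.indicator_eq_self (s := Set.Ici z).2 (hf.trans fun x hx ↦ hzL.trans hx.1), h0]
  · have hRz : R ≤ z := by by_contra! hzR; exact hz ⟨hLz, hzR⟩
    rw [Set.indicator_eq_zero.2, integral_zero]
    exact Set.disjoint_left.2 fun x hxf hx ↦ (hf hxf).2.not_gt (hRz.trans_lt hx)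

lemma bexp_eq_pow (b ℓ k : ℕ) :
    bexp b ℓ k = (Complex.exp (2 * Real.pi * Complex.I / b) ^ ℓ) ^ k := by
  rw [← pow_mul, ← Complex.exp_nat_mul, bexp]
  push_cast
  ring_nf

lemma sum_range_bexp_eq_zero {b ℓ : ℕ} (h : ¬ b ∣ ℓ) : ∑ k ∈ range b, bexp b ℓ k = 0 := by
  rcases eq_or_ne b 0 with rfl | hb
  · simp
  have hζ := Complex.isPrimitiveRoot_exp b hb
  have hne : Complex.exp (2 * Real.pi * Complex.I / b) ^ ℓ ≠ 1 :=
    mt (hζ.pow_eq_one_iff_dvd ℓ).1 h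
  simp only [bexp_eq_pow]
  rw [geom_sum_eq hne, pow_right_comm, hζ.pow_eq_one, one_pow, sub_self, zero_div]

def haarPiece (b j m k : ℕ) : Set ℝ :=
  Set.Ico (((b:ℝ)^(j+1))⁻¹ * ((b:ℝ)*m + k)) (((b:ℝ)^(j+1))⁻¹ * ((b:ℝ)*m + k + 1))

lemma measurableSet_haarPiece {b j m k : ℕ} : MeasurableSet (haarPiece b j m k) :=
  measurableSet_Ico

lemma haar_eq_sum_indicator (b j m ℓ : ℕ) :
    haar b j m ℓ =
      fun x ↦ ∑ k ∈ range b, (haarPiece b j m k).indicator (fun _ ↦ bexp b ℓ k) x := by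
  ext x
  simp only [haar, Set.indicator_apply, haarPiece, Set.mem_Ico]

lemma volume_real_haarPiece (b j m k : ℕ) :
    volume.real (haarPiece b j m k) = ((b:ℝ)^(j+1))⁻¹ := by
  rw [haarPiece,
    Real.volume_real_Ico_of_le (mul_le_mul_of_nonneg_left (by linarith) (by positivity))]
  ring

lemma haarPiece_subset {b j m k : ℕ} (hk : k < b) :
    haarPiece b j m k ⊆ Set.Ico ((b:ℝ)^(-(j:ℤ)) * m) ((b:ℝ)^(-(j:ℤ)) * (m + 1)) := by
  have hkb : (k:ℝ) + 1 ≤ b := by exact_mod_cast hk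
  have e : ∀ y : ℝ, (b:ℝ)^(-(j:ℤ)) * y = ((b:ℝ)^(j+1))⁻¹ * (b * y) := fun y ↦ by
    have hb : (b:ℝ) ≠ 0 := Nat.cast_ne_zero.2 (by omega)
    rw [zpow_neg, zpow_natCast, pow_succ]; field_simp
  rw [e, e]
  apply Set.Ico_subset_Ico <;> gcongr <;> linarith

lemma support_haar_subset (b j m ℓ : ℕ) :
    Function.support (haar b j m ℓ) ⊆
      Set.Ico ((b:ℝ)^(-(j:ℤ)) * m) ((b:ℝ)^(-(j:ℤ)) * (m + 1)) := by
  rw [haar_eq_sum_indicator]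
  refine (Finset.support_sum _ _).trans (Set.iUnion₂_subset fun k hk ↦ ?_)
  exact Set.support_indicator_subset.trans (haarPiece_subset (mem_range.1 hk))

lemma Ico_subset_Ico_zero_one {b j m : ℕ} (hm : m < b ^ j) :
    Set.Ico ((b:ℝ)^(-(j:ℤ)) * m) ((b:ℝ)^(-(j:ℤ)) * (m + 1)) ⊆ Set.Ico 0 1 := by
  have hbj : (0:ℝ) < (b:ℝ) ^ j := by exact_mod_cast m.zero_le.trans_lt hm
  have hm' : (m:ℝ) + 1 ≤ (b:ℝ) ^ j := by exact_mod_cast hm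
  rw [zpow_neg, zpow_natCast]
  exact Set.Ico_subset_Ico (by positivity) ((inv_mul_le_one₀ hbj).2 hm')

lemma integral_haar_eq_zero {b ℓ : ℕ} (h : ¬ b ∣ ℓ) (j m : ℕ) :
    ∫ x, haar b j m ℓ x = 0 := by
  simp only [haar_eq_sum_indicator]
  rw [integral_finsetSum _ fun k _ ↦
    (integrableOn_const measure_Ico_lt_top.ne).integrable_indicator measurableSet_haarPiece]
  simp only [integral_indicator_const _ measurableSet_haarPiece, volume_real_haarPiece,
    ← smul_sum, sum_range_bexp_eq_zero h, smul_zero]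

lemma setIntegral_Ico_indicator_Ioi_haar_eq_zero {b j m ℓ : ℕ} (h : ¬ b ∣ ℓ) (hm : m < b ^ j)
    {z : ℝ} (hz : z ∉ Set.Ioo ((b:ℝ)^(-(j:ℤ)) * m) ((b:ℝ)^(-(j:ℤ)) * (m + 1))) :
    ∫ x in Set.Ico (0:ℝ) 1, (Set.Ioi z).indicator (haar b j m ℓ) x = 0 := by
  have hsupp := support_haar_subset b j m ℓ
  have hmean : ∫ x in Set.Ico (0:ℝ) 1, haar b j m ℓ x = 0 := by
    rw [setIntegral_eq_integral_of_forall_compl_eq_zero fun x hx ↦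
      Function.notMem_support.1 fun hx' ↦ hx (Ico_subset_Ico_zero_one hm (hsupp hx'))]
    exact integral_haar_eq_zero h j m
  exact integral_indicator_Ioi_eq_zero (hsupp.trans Set.Ico_subset_Icc_self) hmean hz

theorem haar_coeff_indicator_eq_zero_general (b : ℕ) (j₁ j₂ m₁ m₂ ℓ₁ ℓ₂ : ℕ)
    (hm₁ : m₁ < b ^ j₁) (hm₂ : m₂ < b ^ j₂)
    (hℓ₁ : 1 ≤ ℓ₁) (hℓ₁' : ℓ₁ ≤ b - 1) (hℓ₂ : 1 ≤ ℓ₂) (hℓ₂' : ℓ₂ ≤ b - 1)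
    (z₁ z₂ : ℝ)
    (hz : ¬ (z₁ ∈ Set.Ioo ((b:ℝ)^(-(j₁:ℤ)) * m₁) ((b:ℝ)^(-(j₁:ℤ)) * (m₁ + 1)) ∧
             z₂ ∈ Set.Ioo ((b:ℝ)^(-(j₂:ℤ)) * m₂) ((b:ℝ)^(-(j₂:ℤ)) * (m₂ + 1)))) :
    (∫ x₁ in Set.Ico (0:ℝ) 1, ∫ x₂ in Set.Ico (0:ℝ) 1,
        (if z₁ < x₁ then (1:ℂ) else 0) * (if z₂ < x₂ then (1:ℂ) else 0) *
          haar b j₁ m₁ ℓ₁ x₁ * haar b j₂ m₂ ℓ₂ x₂) = 0 := by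
  have hsplit : ∀ x₁ x₂ : ℝ,
      (if z₁ < x₁ then (1:ℂ) else 0) * (if z₂ < x₂ then (1:ℂ) else 0) *
          haar b j₁ m₁ ℓ₁ x₁ * haar b j₂ m₂ ℓ₂ x₂ =
        (Set.Ioi z₁).indicator (haar b j₁ m₁ ℓ₁) x₁ *
          (Set.Ioi z₂).indicator (haar b j₂ m₂ ℓ₂) x₂ := by
    intro x₁ x₂
    simp only [Set.indicator_apply, Set.mem_Ioi]
    split_ifs <;> ring
  simp_rw [hsplit, integral_const_mul, integral_mul_const]
  rcases not_and_or.1 hz with h | h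
  · rw [setIntegral_Ico_indicator_Ioi_haar_eq_zero (Nat.not_dvd_of_pos_of_lt hℓ₁ (by omega)) hm₁ h,
      zero_mul]
  · rw [setIntegral_Ico_indicator_Ioi_haar_eq_zero (Nat.not_dvd_of_pos_of_lt hℓ₂ (by omega)) hm₂ h,
      mul_zero]

/-- If `z = (z₁,z₂) ∈ [0,1)²` does not lie in the interior of the `b`-adic box
`I_{j₁,m₁} × I_{j₂,m₂}`, the Haar coefficient of the indicator of `(z₁,1) × (z₂,1)`
vanishes. -/
theorem haar_coeff_indicator_eq_zero (b : ℕ) (hb : 2 ≤ b) (j₁ j₂ m₁ m₂ ℓ₁ ℓ₂ : ℕ)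
    (hm₁ : m₁ < b ^ j₁) (hm₂ : m₂ < b ^ j₂)
    (hℓ₁ : 1 ≤ ℓ₁) (hℓ₁' : ℓ₁ ≤ b - 1) (hℓ₂ : 1 ≤ ℓ₂) (hℓ₂' : ℓ₂ ≤ b - 1)
    (z₁ z₂ : ℝ) (hz₁ : z₁ ∈ Set.Ico (0:ℝ) 1) (hz₂ : z₂ ∈ Set.Ico (0:ℝ) 1)
    (hz : ¬ (z₁ ∈ Set.Ioo ((b:ℝ)^(-(j₁:ℤ)) * m₁) ((b:ℝ)^(-(j₁:ℤ)) * (m₁ + 1)) ∧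
             z₂ ∈ Set.Ioo ((b:ℝ)^(-(j₂:ℤ)) * m₂) ((b:ℝ)^(-(j₂:ℤ)) * (m₂ + 1)))) :
    (∫ x₁ in Set.Ico (0:ℝ) 1, ∫ x₂ in Set.Ico (0:ℝ) 1,
        (if z₁ < x₁ then (1:ℂ) else 0) * (if z₂ < x₂ then (1:ℂ) else 0) *
          haar b j₁ m₁ ℓ₁ x₁ * haar b j₂ m₂ ℓ₂ x₂) = 0 :=
  haar_coeff_indicator_eq_zero_general b j₁ j₂ m₁ m₂ ℓ₁ ℓ₂ hm₁ hm₂ hℓ₁ hℓ₁' hℓ₂ hℓ₂' z₁ z₂ hz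
end

section
/- Let b ≥ 2 be an integer, j₁ ∈ ℕ₀ = {0,1,2,…}, m₁ ∈ {0,…,b^{j₁}−1}, ℓ₁ ∈ {1,…,b−1}, and let z = (z₁,z₂) ∈ [0,1)² with z₁ in the open interval (b^{−j₁}m₁, b^{−j₁}(m₁+1)). Let k₁ ∈ {0,…,b−1} be such that z₁ ∈ [b^{−j₁−1}(bm₁+k₁), b^{−j₁−1}(bm₁+k₁+1)). Then ∫_{[0,1)²} 1[x₁ > z₁]·1[x₂ > z₂] · h_{j₁,m₁,ℓ₁}(x₁) dx₁dx₂ = b^{−j₁−1} · [(bm₁+k₁+1−b^{j₁+1}z₁)·exp(2πik₁ℓ₁/b) + ∑_{r₁=k₁+1}^{b−1} exp(2πir₁ℓ₁/b)] · (1 − z₂). -/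
open Finset MeasureTheory

/-!
The integrand factors as a function of `x₁` times `1[x₂ > z₂]`, and the latter integrates to
`1 - z₂`. On `[0,1)` the Haar function is a step function, constant equal to `exp(2πiℓk/b)` on
the `k`-th cell of width `b^{-j-1}` of `I_{j,m}`, so cutting it off at `z₁` weights each cell by
the length of its part to the right of `z₁`: nothing for the cells left of `z₁`, the whole
width for the cells right of it, and `b^{-j-1}(bm+k₁+1) - z₁` for the cell `k₁` that contains
`z₁`.
-/

theorem Finset.sum_range_eq_add_sum_Ico_of_eq_zero {M : Type*} [AddCommMonoid M] {f : ℕ → M}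
    {k n : ℕ} (hk : k < n) (hf : ∀ i < k, f i = 0) :
    ∑ i ∈ range n, f i = f k + ∑ i ∈ Ico (k + 1) n, f i := by
  rw [← sum_range_add_sum_Ico f hk.le, sum_eq_zero fun i hi => hf i (mem_range.1 hi), zero_add,
    sum_eq_sum_Ico_succ_bot hk]

open Set

theorem Real.volume_real_Ioi_inter_Ico (z c d : ℝ) :
    volume.real (Ioi z ∩ Ico c d) = max (d - max z c) 0 := by
  rw [measureReal_congr ((Filter.EventuallyEq.refl _ _).inter Ico_ae_eq_Ioc), inter_comm,
    Ioc_inter_Ioi, Real.volume_real_Ioc, max_comm c]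

section IntervalVolume

variable {z c d : ℝ}

theorem Real.volume_real_Ioi_inter_Ico_of_right_le (h : d ≤ z) :
    volume.real (Ioi z ∩ Ico c d) = 0 := by
  rw [Real.volume_real_Ioi_inter_Ico, max_eq_right]
  linarith [le_max_left z c]

theorem Real.volume_real_Ioi_inter_Ico_of_mem (hc : c ≤ z) (hd : z ≤ d) :
    volume.real (Ioi z ∩ Ico c d) = d - z := by
  rw [Real.volume_real_Ioi_inter_Ico, max_eq_left hc, max_eq_left (sub_nonneg.2 hd)]

theorem Real.volume_real_Ioi_inter_Ico_of_le_left (hz : z ≤ c) (hcd : c ≤ d) :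
    volume.real (Ioi z ∩ Ico c d) = d - c := by
  rw [Real.volume_real_Ioi_inter_Ico, max_eq_right hz, max_eq_left (sub_nonneg.2 hcd)]

end IntervalVolume

theorem ite_lt_mul_ite_mem_Ico {M : Type*} [MulZeroOneClass M] (z c d x : ℝ) (w : M) :
    (if z < x then (1 : M) else 0) * (if c ≤ x ∧ x < d then w else 0)
      = (Ioi z ∩ Ico c d).indicator (fun _ => w) x := by
  by_cases h₁ : z < x <;> by_cases h₂ : c ≤ x ∧ x < d <;> simp [h₁, h₂]

theorem setIntegral_ite_lt_mul_ite_mem_Ico {s : Set ℝ} {c d : ℝ} (hs : Ico c d ⊆ s) (z : ℝ)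
    (w : ℂ) :
    ∫ x in s, (if z < x then (1 : ℂ) else 0) * (if c ≤ x ∧ x < d then w else 0)
      = volume.real (Ioi z ∩ Ico c d) * w := by
  simp_rw [ite_lt_mul_ite_mem_Ico]
  rw [integral_indicator_const w (measurableSet_Ioi.inter measurableSet_Ico),
    measureReal_restrict_apply (measurableSet_Ioi.inter measurableSet_Ico),
    inter_eq_left.2 (inter_subset_right.trans hs), Complex.real_smul]

theorem setIntegral_Ico_ite_lt {z : ℝ} (hz₀ : 0 ≤ z) (hz₁ : z ≤ 1) :
    ∫ x in Ico (0 : ℝ) 1, (if z < x then (1 : ℂ) else 0) = 1 - z := by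
  have h := setIntegral_ite_lt_mul_ite_mem_Ico (subset_refl (Ico (0 : ℝ) 1)) z 1
  rw [Real.volume_real_Ioi_inter_Ico_of_mem hz₀ hz₁, mul_one] at h
  rw [← Complex.ofReal_one, ← Complex.ofReal_sub, ← h]
  refine setIntegral_congr_fun measurableSet_Ico fun x hx => ?_
  simp [hx.1, hx.2]

theorem setIntegral_Ico_ite_lt_mul_haar {b j m ℓ k : ℕ} (hm : m < b ^ j) (hk : k < b) {z : ℝ}
    (hz : ((b : ℝ) ^ (j + 1))⁻¹ * ((b : ℝ) * m + k) ≤ z ∧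
      z < ((b : ℝ) ^ (j + 1))⁻¹ * ((b : ℝ) * m + k + 1)) :
    ∫ x in Ico (0 : ℝ) 1, (if z < x then (1 : ℂ) else 0) * haar b j m ℓ x
      = (b : ℂ) ^ (-(j : ℤ) - 1) * (((b : ℂ) * m + k + 1 - (b : ℂ) ^ (j + 1) * z) * bexp b ℓ k +
          ∑ r ∈ Finset.Icc (k + 1) (b - 1), bexp b ℓ r) := by
  set δ := ((b : ℝ) ^ (j + 1))⁻¹ with hδ_def
  have hb : 0 < b := k.zero_le.trans_lt hk
  have hδ : 0 < δ := by positivity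
  have hgrid {i i' : ℕ} (h : i < i') : δ * (b * m + i + 1) ≤ δ * (b * m + i') := by
    have : (i : ℝ) + 1 ≤ i' := by exact_mod_cast h
    exact mul_le_mul_of_nonneg_left (by linarith) hδ.le
  have hwidth (i : ℕ) : δ * (b * m + i + 1) - δ * (b * m + i) = δ := by ring
  have hcell {i : ℕ} (hi : i < b) : Ico (δ * (b * m + i)) (δ * (b * m + i + 1)) ⊆ Ico 0 1 := by
    have hnat : b * m + b ≤ b ^ (j + 1) := by
      rw [pow_succ']
      exact Nat.mul_le_mul_left b hm
    have : δ * (b * m + b) ≤ 1 := by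
      rw [hδ_def, inv_mul_le_one₀ (by positivity)]
      exact_mod_cast hnat
    exact Ico_subset_Ico (by positivity) ((hgrid hi).trans this)
  have hint (i : ℕ) : IntegrableOn (fun x => (if z < x then (1 : ℂ) else 0) *
      (if δ * (b * m + i) ≤ x ∧ x < δ * (b * m + i + 1) then bexp b ℓ i else 0)) (Ico 0 1) := by
    simp_rw [ite_lt_mul_ite_mem_Ico]
    exact (integrableOn_const measure_Ico_lt_top.ne).indicator
      (measurableSet_Ioi.inter measurableSet_Ico)
  simp_rw [haar, mul_sum]
  rw [integral_finsetSum _ fun i _ => hint i,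
    sum_congr rfl fun i hi => setIntegral_ite_lt_mul_ite_mem_Ico (hcell (mem_range.1 hi)) z _,
    sum_range_eq_add_sum_Ico_of_eq_zero hk fun i hi => by
      rw [Real.volume_real_Ioi_inter_Ico_of_right_le ((hgrid hi).trans hz.1), Complex.ofReal_zero,
        zero_mul],
    Real.volume_real_Ioi_inter_Ico_of_mem hz.1 hz.2.le,
    sum_congr rfl fun i hi => by
      rw [Real.volume_real_Ioi_inter_Ico_of_le_left
        (hz.2.le.trans (hgrid (Finset.mem_Ico.1 hi).1)) (by linarith), hwidth]]
  have hIcc : Finset.Icc (k + 1) (b - 1) = Finset.Ico (k + 1) b := by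
    rw [← Finset.Ico_add_one_right_eq_Icc, Nat.sub_one_add_one hb.ne']
  have hzpow : (b : ℂ) ^ (-(j : ℤ) - 1) = δ := by
    rw [hδ_def, show -(j : ℤ) - 1 = -((j + 1 : ℕ) : ℤ) by push_cast; ring, zpow_neg, zpow_natCast]
    push_cast
    rfl
  have hδb : (δ : ℂ) * (b : ℂ) ^ (j + 1) = 1 := by
    rw [hδ_def]
    push_cast
    exact inv_mul_cancel₀ (by simp [hb.ne'])
  rw [hIcc, hzpow, ← mul_sum]
  push_cast
  linear_combination (z : ℂ) * bexp b ℓ k * hδb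

theorem haar_coeff_indicator_mixed_general (b : ℕ) (j₁ m₁ ℓ₁ : ℕ)
    (hm₁ : m₁ < b ^ j₁)
    (z₁ z₂ : ℝ) (hz₂' : z₂ ∈ Set.Ico (0:ℝ) 1)
    (k₁ : ℕ) (hk₁ : k₁ < b)
    (hzk₁ : ((b:ℝ)^(j₁+1))⁻¹ * ((b:ℝ)*m₁ + k₁) ≤ z₁ ∧
            z₁ < ((b:ℝ)^(j₁+1))⁻¹ * ((b:ℝ)*m₁ + k₁ + 1)) :
    (∫ x₁ in Set.Ico (0:ℝ) 1, ∫ x₂ in Set.Ico (0:ℝ) 1,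
        (if z₁ < x₁ then (1:ℂ) else 0) * (if z₂ < x₂ then (1:ℂ) else 0) *
          haar b j₁ m₁ ℓ₁ x₁)
      = (b : ℂ) ^ (-(j₁:ℤ) - 1) *
        (((b:ℂ)*m₁ + k₁ + 1 - (b:ℂ)^(j₁+1) * (z₁:ℂ)) * bexp b ℓ₁ k₁ +
          ∑ r₁ ∈ Finset.Icc (k₁+1) (b-1), bexp b ℓ₁ r₁) *
        (1 - (z₂:ℂ)) := by
  simp_rw [mul_right_comm _ _ (haar b j₁ m₁ ℓ₁ _), integral_const_mul, integral_mul_const,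
    setIntegral_Ico_ite_lt hz₂'.1 hz₂'.2.le, setIntegral_Ico_ite_lt_mul_haar hm₁ hk₁ hzk₁]

/-- The Haar coefficient of the indicator of `(z₁,1) × (z₂,1)` for the index
`j = (j₁, −1)`, the second factor being `h_{−1,0,1} = 1_{[0,1)}`. -/
theorem haar_coeff_indicator_mixed (b : ℕ) (hb : 2 ≤ b) (j₁ m₁ ℓ₁ : ℕ)
    (hm₁ : m₁ < b ^ j₁) (hℓ₁ : 1 ≤ ℓ₁) (hℓ₁' : ℓ₁ ≤ b - 1)
    (z₁ z₂ : ℝ) (hz₁' : z₁ ∈ Set.Ico (0:ℝ) 1) (hz₂' : z₂ ∈ Set.Ico (0:ℝ) 1)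
    (hz₁ : z₁ ∈ Set.Ioo ((b:ℝ)^(-(j₁:ℤ)) * m₁) ((b:ℝ)^(-(j₁:ℤ)) * (m₁ + 1)))
    (k₁ : ℕ) (hk₁ : k₁ < b)
    (hzk₁ : ((b:ℝ)^(j₁+1))⁻¹ * ((b:ℝ)*m₁ + k₁) ≤ z₁ ∧
            z₁ < ((b:ℝ)^(j₁+1))⁻¹ * ((b:ℝ)*m₁ + k₁ + 1)) :
    (∫ x₁ in Set.Ico (0:ℝ) 1, ∫ x₂ in Set.Ico (0:ℝ) 1,
        (if z₁ < x₁ then (1:ℂ) else 0) * (if z₂ < x₂ then (1:ℂ) else 0) *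
          haar b j₁ m₁ ℓ₁ x₁)
      = (b : ℂ) ^ (-(j₁:ℤ) - 1) *
        (((b:ℂ)*m₁ + k₁ + 1 - (b:ℂ)^(j₁+1) * (z₁:ℂ)) * bexp b ℓ₁ k₁ +
          ∑ r₁ ∈ Finset.Icc (k₁+1) (b-1), bexp b ℓ₁ r₁) *
        (1 - (z₂:ℂ)) :=
  haar_coeff_indicator_mixed_general b j₁ m₁ ℓ₁ hm₁ z₁ z₂ hz₂' k₁ hk₁ hzk₁
end
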